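/- Let $A$ be an $RG$-module and $P_* \to A$ an $\mathfrak{F}$-split resolution of finite length $n$ with $P_i$ $\mathfrak{F}$-projective for all $i \geq 1$. Then the augmented complex $P_* \to A$ is $\mathfrak{F}_G$-proper, i.e. $\mathrm{Hom}_{RG}(Q, -)$ applied to it remains exact for every $\mathfrak{F}_G$-projective module $Q$. -/

import Mathlib

open CategoryTheory CategoryTheory.Limits CategoryTheory.MonoidalCategory

noncomputable section
namespace FPaper

variable (R : Type) [CommRing R] (G : Type) [Group G]

/-- The disjoint union `Δ = ⨿_{H finite} G/H` of coset spaces of finite subgroups. -/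
def DeltaType : Type := Σ H : {H : Subgroup G // Finite H}, G ⧸ H.1

instance : SMul G (DeltaType G) := ⟨fun g x => ⟨x.1, g • x.2⟩⟩

instance : MulAction G (DeltaType G) where
  one_smul x := by cases x with | mk H q => show (⟨H, (1:G) • q⟩ : DeltaType G) = ⟨H, q⟩; rw [one_smul]
  mul_smul g h x := by
    cases x with | mk H q =>
    show (⟨H, (g*h) • q⟩ : DeltaType G) = ⟨H, g • h • q⟩
    rw [mul_smul]

/-- The permutation module `RΔ`. -/
def RDelta : Rep R G := Rep.ofMulAction R G (DeltaType G)

/-- A module is `𝔉`-projective if it is a direct summand of some `N ⊗ RΔ`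
(diagonal `G`-action). -/
def FProjective (M : Rep R G) : Prop :=
  ∃ (N : Rep R G) (i : M ⟶ N ⊗ RDelta R G) (r : N ⊗ RDelta R G ⟶ M), i ≫ r = 𝟙 M

/-- Restriction to a subgroup. -/
def resF (K : Subgroup G) : Rep R G ⥤ Rep R K :=
  Rep.resFunctor K.subtype

/-- A resolution `⋯ → P₁ → P₀ → M → 0`. -/
structure Res (M : Rep R G) where
  P : ℕ → Rep R G
  d : ∀ n, P (n+1) ⟶ P n
  ε : P 0 ⟶ M
  surj : Function.Surjective ε.hom
  exact0 : Function.Exact (d 0).hom ε.hom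
  exact : ∀ n, Function.Exact (d (n+1)).hom (d n).hom

variable {R G}

/-- The (augmented) resolution is split exact over every finite subgroup:
there is an `RK`-linear chain contraction for every finite `K ≤ G`. -/
def Res.FSplit {M : Rep R G} (res : Res R G M) : Prop :=
  ∀ K : Subgroup G, Finite K →
    ∃ (t : (resF R G K).obj M ⟶ (resF R G K).obj (res.P 0))
      (s : ∀ n, (resF R G K).obj (res.P n) ⟶ (resF R G K).obj (res.P (n+1))),
      t ≫ (resF R G K).map res.ε = 𝟙 _ ∧
      (resF R G K).map res.ε ≫ t + s 0 ≫ (resF R G K).map (res.d 0) = 𝟙 _ ∧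
      ∀ n, (resF R G K).map (res.d n) ≫ s n + s (n+1) ≫ (resF R G K).map (res.d (n+1)) = 𝟙 _

/-- All modules in the resolution are `𝔉`-projective. -/
def Res.FProj {M : Rep R G} (res : Res R G M) : Prop := ∀ n, FProjective R G (res.P n)

/-- The resolution has length at most `n`. -/
def Res.LengthLe {M : Rep R G} (res : Res R G M) (n : ℕ) : Prop :=
  ∀ i, n < i → IsZero (res.P i)


/-- `M` is `𝔉_G`-projective: it is a cokernel in an `𝔉`-strong `𝔉`-complete
resolution, i.e. an acyclic `𝔉`-split `ℤ`-indexed complex of `𝔉`-projectives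
which stays exact under `Hom(-, Q)` for every `𝔉`-projective `Q`. -/
def FGProjective (R : Type) [CommRing R] (G : Type) [Group G] (M : Rep R G) : Prop :=
  ∃ (T : ℤ → Rep R G) (d : ∀ n : ℤ, T (n+1) ⟶ T n) (π : T 0 ⟶ M),
    (∀ n, FProjective R G (T n)) ∧
    (∀ n : ℤ, Function.Exact (d (n+1)).hom (d n).hom) ∧
    (∀ K : Subgroup G, Finite K →
      ∃ s : ∀ n : ℤ, (resF R G K).obj (T n) ⟶ (resF R G K).obj (T (n+1)),
        ∀ n : ℤ, (resF R G K).map (d n) ≫ s n + s (n+1) ≫ (resF R G K).map (d (n+1)) = 𝟙 _) ∧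
    Function.Surjective π.hom ∧ Function.Exact (d 0).hom π.hom ∧
    (∀ Q : Rep R G, FProjective R G Q → ∀ (n : ℤ) (φ : T (n+1) ⟶ Q),
      d (n+1) ≫ φ = 0 → ∃ ψ : T n ⟶ Q, φ = d n ≫ ψ)

variable (R : Type) [CommRing R] (G : Type) [Group G]

/-- A right resolution `0 → M → T⁰ → T¹ → ⋯`. -/
structure CoRes (M : Rep R G) where
  T : ℕ → Rep R G
  ι : M ⟶ T 0
  d : ∀ n, T n ⟶ T (n+1)
  inj : Function.Injective ι.hom
  exact0 : Function.Exact ι.hom (d 0).hom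
  exact : ∀ n, Function.Exact (d n).hom (d (n+1)).hom

variable {R G}

/-- All terms of the right resolution are `𝔉`-projective. -/
def CoRes.FProj {M : Rep R G} (c : CoRes R G M) : Prop := ∀ n, FProjective R G (c.T n)

/-- The right resolution is `𝔉`-split: it admits an `RK`-linear chain
contraction for every finite subgroup `K ≤ G`. -/
def CoRes.FSplit {M : Rep R G} (c : CoRes R G M) : Prop :=
  ∀ K : Subgroup G, Finite K →
    ∃ (h0 : (resF R G K).obj (c.T 0) ⟶ (resF R G K).obj M)
      (h : ∀ n, (resF R G K).obj (c.T (n+1)) ⟶ (resF R G K).obj (c.T n)),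
      (resF R G K).map c.ι ≫ h0 = 𝟙 _ ∧
      h0 ≫ (resF R G K).map c.ι + (resF R G K).map (c.d 0) ≫ h 0 = 𝟙 _ ∧
      ∀ n, h n ≫ (resF R G K).map (c.d n)
        + (resF R G K).map (c.d (n+1)) ≫ h (n+1) = 𝟙 _

/-- The right resolution is `𝔉`-strong: it stays exact under `Hom_{RG}(-, Q)`
for every `𝔉`-projective `Q`. -/
def CoRes.FStrong {M : Rep R G} (c : CoRes R G M) : Prop :=
  ∀ Q : Rep R G, FProjective R G Q →
    (∀ φ : M ⟶ Q, ∃ ψ : c.T 0 ⟶ Q, c.ι ≫ ψ = φ) ∧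
    (∀ φ : c.T 0 ⟶ Q, c.ι ≫ φ = 0 → ∃ ψ : c.T 1 ⟶ Q, φ = c.d 0 ≫ ψ) ∧
    (∀ (n : ℕ) (φ : c.T (n+1) ⟶ Q), c.d n ≫ φ = 0 →
      ∃ ψ : c.T (n+2) ⟶ Q, φ = c.d (n+1) ≫ ψ)

/-!
Let `T ⟶ Q` be a complete resolution and `M = (0 ← A ← P₀ ← P₁ ← ⋯)` the augmented complex.
A cycle `u : Q ⟶ M` extends, through `T₀ ⟶ Q`, to a chain map from `T` to `M`: every `Tⱼ` is
`𝔉`-projective, and a map out of a summand of `N ⊗ RΔ` that lifts over every finite subgroup `H`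
lifts over `G`, by transporting the `H`-lift along coset representatives of `G/H`; the
`𝔉`-splitting of `M` supplies the `H`-lifts. As `M` has finite length, the chain map vanishes in
high degrees, and exactness of `Hom(T, Mᵢ)` for the `𝔉`-projective `Mᵢ` pushes a null-homotopy
down degree by degree. In degree `0` it corrects the chain map to one vanishing on the image of
`T₁`, which therefore factors through `Q` and lifts `u`.
-/

lemma comp_eq_zero_of_exact {X Y Z : Rep R G} {f : X ⟶ Y} {g : Y ⟶ Z}
    (h : Function.Exact f.hom g.hom) : f ≫ g = 0 := by
  ext x
  exact h.apply_apply_eq_zero x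

lemma exists_comp_eq_of_exact_of_surjective {X Y Z V : Rep R G} {f : X ⟶ Y} {g : Y ⟶ Z}
    (hfg : Function.Exact f.hom g.hom) (hg : Function.Surjective g.hom) (φ : Y ⟶ V)
    (hφ : f ≫ φ = 0) : ∃ ψ : Z ⟶ V, g ≫ ψ = φ := by
  have hS : (ShortComplex.mk f g (comp_eq_zero_of_exact hfg)).Exact := by
    rw [← ShortComplex.exact_map_iff_of_faithful _ (forget₂ (Rep R G) (ModuleCat R)),
      ShortComplex.moduleCat_exact_iff]
    exact fun y hy => (hfg y).1 hy
  have : Epi g := (Rep.epi_iff_surjective g).2 hg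
  exact ⟨hS.desc φ hφ, hS.g_desc φ hφ⟩

lemma comp_comp_eq_self_of_add_eq_id {C : Type*} [Category C] [Preadditive C] {V X Y Z : C}
    {d : X ⟶ Y} {d' : Y ⟶ Z} {s : Y ⟶ X} {t : Z ⟶ Y} (h : d' ≫ t + s ≫ d = 𝟙 Y)
    {φ : V ⟶ Y} (hφ : φ ≫ d' = 0) : (φ ≫ s) ≫ d = φ := by
  simpa [Preadditive.comp_add, reassoc_of% hφ] using φ ≫= h

instance (K : Subgroup G) : (resF R G K).Additive :=
  inferInstanceAs (Rep.resFunctor K.subtype).Additive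

lemma exists_resF_lift_of_comp_eq_id {K : Subgroup G} {V X Y : Rep R G} {d : X ⟶ Y}
    {t : (resF R G K).obj Y ⟶ (resF R G K).obj X} (h : t ≫ (resF R G K).map d = 𝟙 _)
    (φ : V ⟶ Y) :
    ∃ l : (resF R G K).obj V ⟶ (resF R G K).obj X, l ≫ (resF R G K).map d = (resF R G K).map φ :=
  ⟨_ ≫ t, by rw [Category.assoc, h, Category.comp_id]⟩

lemma exists_resF_lift_of_add_eq_id {K : Subgroup G} {V X Y Z : Rep R G} {d : X ⟶ Y}
    {d' : Y ⟶ Z} {s : (resF R G K).obj Y ⟶ (resF R G K).obj X}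
    {t : (resF R G K).obj Z ⟶ (resF R G K).obj Y}
    (h : (resF R G K).map d' ≫ t + s ≫ (resF R G K).map d = 𝟙 _) {φ : V ⟶ Y}
    (hφ : φ ≫ d' = 0) :
    ∃ l : (resF R G K).obj V ⟶ (resF R G K).obj X, l ≫ (resF R G K).map d = (resF R G K).map φ :=
  ⟨_, comp_comp_eq_self_of_add_eq_id h (by rw [← Functor.map_comp, hφ, Functor.map_zero])⟩

lemma tensorProduct_monoidAlgebra_ext {Δ V P : Type*} [AddCommGroup V] [Module R V]
    [AddCommGroup P] [Module R P] {f f' : TensorProduct R V (MonoidAlgebra R Δ) →ₗ[R] P}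
    (h : ∀ v x, f (v ⊗ₜ[R] MonoidAlgebra.single x 1) = f' (v ⊗ₜ[R] MonoidAlgebra.single x 1)) :
    f = f' :=
  TensorProduct.ext' fun v => LinearMap.congr_fun <|
    (MonoidAlgebra.basis Δ R).ext (f₁ := f ∘ₗ TensorProduct.mk R V _ v)
      (f₂ := f' ∘ₗ TensorProduct.mk R V _ v) fun x => h v x

section CosetConj
variable {H : Subgroup G} {W X Y : Rep R G}

lemma out_inv_mul_mul_out_mem (g : G) (q : G ⧸ H) : (g • q).out⁻¹ * g * q.out ∈ H := by
  rw [mul_assoc, ← QuotientGroup.eq, QuotientGroup.out_eq', ← smul_eq_mul,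
    MulAction.Quotient.mk_smul_out]

def conjByOut (l : W.V →ₗ[R] X.V) (q : G ⧸ H) : W.V →ₗ[R] X.V :=
  X.ρ q.out ∘ₗ l ∘ₗ W.ρ q.out⁻¹

lemma conjByOut_smul {l : W.V →ₗ[R] X.V} (hl : ∀ (k : H) (w : W), l (W.ρ k w) = X.ρ k (l w))
    (g : G) (q : G ⧸ H) (w : W) : conjByOut l (g • q) (W.ρ g w) = X.ρ g (conjByOut l q w) := by
  set a := q.out
  set b := (g • q).out
  let k : H := ⟨b⁻¹ * g * a, out_inv_mul_mul_out_mem g q⟩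
  have hW : W.ρ b⁻¹ (W.ρ g w) = W.ρ k (W.ρ a⁻¹ w) := by
    rw [← Module.End.mul_apply, ← map_mul, ← Module.End.mul_apply, ← map_mul]
    simp [k, mul_assoc]
  have hX : b * k = g * a := by simp [k, mul_assoc]
  calc X.ρ b (l (W.ρ b⁻¹ (W.ρ g w))) = X.ρ b (X.ρ k (l (W.ρ a⁻¹ w))) := by rw [hW, hl]
    _ = X.ρ g (X.ρ a (l (W.ρ a⁻¹ w))) := by
        rw [← Module.End.mul_apply, ← map_mul, hX, map_mul, Module.End.mul_apply]

lemma comp_conjByOut {l : W.V →ₗ[R] X.V} {e : X ⟶ Y} {f : W ⟶ Y}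
    (hl : ∀ w, e.hom (l w) = f.hom w) (q : G ⧸ H) (w : W) :
    e.hom (conjByOut l q w) = f.hom w := by
  change e.hom (X.ρ q.out (l (W.ρ q.out⁻¹ w))) = f.hom w
  rw [Rep.hom_comm_apply, hl, ← Rep.hom_comm_apply, ← Module.End.mul_apply, ← map_mul,
    mul_inv_cancel, map_one, Module.End.one_apply]

end CosetConj

section TensorOfMulAction
variable {Δ : Type} [MulAction G Δ] {N X Y : Rep.{0} R G}

def tensorOfMulActionLinearMap (T : Δ → ((N ⊗ Rep.ofMulAction R G Δ).V →ₗ[R] X.V)) :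
    (N ⊗ Rep.ofMulAction R G Δ).V →ₗ[R] X.V :=
  TensorProduct.lift ((MonoidAlgebra.basis Δ R).constr R fun x =>
    T x ∘ₗ (TensorProduct.mk R N.V (MonoidAlgebra R Δ)).flip (MonoidAlgebra.single x 1)).flip

lemma tensorOfMulActionLinearMap_tmul_single
    (T : Δ → ((N ⊗ Rep.ofMulAction R G Δ).V →ₗ[R] X.V)) (v : N) (x : Δ) :
    tensorOfMulActionLinearMap T (v ⊗ₜ[R] MonoidAlgebra.single x 1) =
      T x (v ⊗ₜ[R] MonoidAlgebra.single x 1) := by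
  rw [tensorOfMulActionLinearMap, TensorProduct.lift.tmul, LinearMap.flip_apply,
    ← MonoidAlgebra.basis_apply R x, Module.Basis.constr_basis]
  rfl

lemma tensor_ofMulAction_ρ_tmul_single (g : G) (v : N) (x : Δ) :
    (N ⊗ Rep.ofMulAction R G Δ).ρ g (v ⊗ₜ[R] MonoidAlgebra.single x 1) =
      N.ρ g v ⊗ₜ[R] MonoidAlgebra.single (g • x) 1 := by
  rw [Rep.tensor_ρ, Representation.tprod_apply, TensorProduct.map_tmul]
  exact congrArg _ (Representation.ofMulAction_single g x 1)

variable {T : Δ → ((N ⊗ Rep.ofMulAction R G Δ).V →ₗ[R] X.V)}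

def tensorOfMulActionHom
    (hT : ∀ g x w, T (g • x) ((N ⊗ Rep.ofMulAction R G Δ).ρ g w) = X.ρ g (T x w)) :
    N ⊗ Rep.ofMulAction R G Δ ⟶ X :=
  ConcreteCategory.ofHom (C := Rep R G) ⟨tensorOfMulActionLinearMap T, fun g =>
    tensorProduct_monoidAlgebra_ext fun v x => by
      rw [LinearMap.comp_apply, LinearMap.comp_apply, tensor_ofMulAction_ρ_tmul_single,
        tensorOfMulActionLinearMap_tmul_single, tensorOfMulActionLinearMap_tmul_single, ← hT,
        tensor_ofMulAction_ρ_tmul_single]⟩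

lemma tensorOfMulActionHom_comp
    (hT : ∀ g x w, T (g • x) ((N ⊗ Rep.ofMulAction R G Δ).ρ g w) = X.ρ g (T x w))
    {e : X ⟶ Y} {f : N ⊗ Rep.ofMulAction R G Δ ⟶ Y} (he : ∀ x w, e.hom (T x w) = f.hom w) :
    tensorOfMulActionHom hT ≫ e = f := by
  ext : 2
  refine tensorProduct_monoidAlgebra_ext fun v x => ?_
  exact (congrArg e.hom (tensorOfMulActionLinearMap_tmul_single T v x)).trans (he x _)

end TensorOfMulAction

theorem FProjective.exists_lift {W X Y : Rep R G} (hW : FProjective R G W) (e : X ⟶ Y)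
    (f : W ⟶ Y) (hf : ∀ H : Subgroup G, Finite H → ∃ l : (resF R G H).obj W ⟶ (resF R G H).obj X,
      l ≫ (resF R G H).map e = (resF R G H).map f) :
    ∃ l : W ⟶ X, l ≫ e = f := by
  obtain ⟨N, i, r, hir⟩ := hW
  unfold RDelta at i r hir
  choose l hl using fun H : {H : Subgroup G // Finite H} => hf H.1 H.2
  let lr (H : {H : Subgroup G // Finite H}) :
      (N ⊗ Rep.ofMulAction R G (DeltaType G)).V →ₗ[R] X.V :=
    (l H).hom.toLinearMap ∘ₗ r.hom.toLinearMap
  have hlr (H : {H : Subgroup G // Finite H}) (k : H.1)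
      (w : (N ⊗ Rep.ofMulAction R G (DeltaType G)).V) :
      lr H ((N ⊗ Rep.ofMulAction R G (DeltaType G)).ρ k w) = X.ρ k (lr H w) := by
    change (l H).hom (r.hom _) = _
    rw [Rep.hom_comm_apply r k w]
    exact Rep.hom_comm_apply (l H) k (r.hom w)
  let T (x : DeltaType G) : (N ⊗ Rep.ofMulAction R G (DeltaType G)).V →ₗ[R] X.V :=
    conjByOut (lr x.1) x.2
  have hT : ∀ g x w, T (g • x) ((N ⊗ Rep.ofMulAction R G (DeltaType G)).ρ g w) =
      X.ρ g (T x w) := fun g x =>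
    conjByOut_smul (hlr x.1) g x.2
  have he : ∀ x w, e.hom (T x w) = (r ≫ f).hom w := fun x =>
    comp_conjByOut (fun w => by have h := congr($(hl x.1).hom (r.hom w)); exact h) x.2
  exact ⟨i ≫ tensorOfMulActionHom hT, by
    rw [Category.assoc, tensorOfMulActionHom_comp hT he, ← Category.assoc, hir, Category.id_comp]⟩

/-- `Hom(W, -)` is exact at the middle of `M (i + 2) ⟶ M (i + 1) ⟶ M i`. -/
def HomFromExactAt (W : Rep R G) (M : ℕ → Rep R G) (δ : ∀ i, M (i + 1) ⟶ M i) (i : ℕ) :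
    Prop :=
  ∀ φ : W ⟶ M (i + 1), φ ≫ δ i = 0 → ∃ ψ : W ⟶ M (i + 2), ψ ≫ δ (i + 1) = φ

/-- `Hom(-, Q)` is exact at the middle of `T (j + 2) ⟶ T (j + 1) ⟶ T j`. -/
def HomToExactAt (T : ℕ → Rep R G) (d : ∀ j, T (j + 1) ⟶ T j) (Q : Rep R G) (j : ℕ) : Prop :=
  ∀ φ : T (j + 1) ⟶ Q, d (j + 1) ≫ φ = 0 → ∃ ψ : T j ⟶ Q, d j ≫ ψ = φ

section ChainMaps
variable {T M : ℕ → Rep R G} {d : ∀ j, T (j + 1) ⟶ T j} {δ : ∀ i, M (i + 1) ⟶ M i}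

theorem exists_chainMap_lift (hd : ∀ j, d (j + 1) ≫ d j = 0)
    (hM : ∀ j, HomFromExactAt (T j) M δ j) (f₀ : T 0 ⟶ M 1) (hf₀ : f₀ ≫ δ 0 = 0)
    (hdf₀ : d 0 ≫ f₀ = 0) :
    ∃ f : ∀ j, T j ⟶ M (j + 2), f 0 ≫ δ 1 = f₀ ∧ ∀ j, f (j + 1) ≫ δ (j + 2) = d j ≫ f j := by
  choose next hnext using fun j (g : T j ⟶ M (j + 2)) (hg : (d j ≫ g) ≫ δ (j + 1) = 0) =>
    hM (j + 1) (d j ≫ g) hg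
  obtain ⟨g₀, hg₀⟩ := hM 0 f₀ hf₀
  let F (j : ℕ) : {g : T j ⟶ M (j + 2) // (d j ≫ g) ≫ δ (j + 1) = 0} :=
    Nat.rec ⟨g₀, by rw [Category.assoc, hg₀, hdf₀]⟩
      (fun j g => ⟨next j g.1 g.2, by
        rw [Category.assoc, hnext, ← Category.assoc, hd, zero_comp]⟩) j
  exact ⟨fun j => (F j).1, hg₀, fun j => hnext j _ _⟩

theorem exists_homotopic_cocycle_of_isZero (hδ : ∀ i, δ (i + 1) ≫ δ i = 0)
    (hT : ∀ j, HomToExactAt T d (M (j + 3)) j) (f : ∀ j, T j ⟶ M (j + 2))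
    (hf : ∀ j, f (j + 1) ≫ δ (j + 2) = d j ≫ f j) (N : ℕ) (hN : IsZero (M (N + 3))) :
    ∃ h : T 0 ⟶ M 3, d 0 ≫ (f 0 - h ≫ δ 2) = 0 := by
  have base : ∃ h : T N ⟶ M (N + 3), d N ≫ (f N - h ≫ δ (N + 2)) = 0 :=
    ⟨0, by rw [zero_comp, sub_zero, ← hf, hN.eq_of_tgt (f (N + 1)) 0, zero_comp]⟩
  refine Nat.decreasingInduction
    (motive := fun j _ => ∃ h : T j ⟶ M (j + 3), d j ≫ (f j - h ≫ δ (j + 2)) = 0)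
    (fun j _ ⟨h, hh⟩ => ?_) base (Nat.zero_le N)
  obtain ⟨ψ, hψ⟩ := hT j _ hh
  refine ⟨ψ, ?_⟩
  rw [Preadditive.comp_sub, ← hf, ← Category.assoc, hψ, Preadditive.sub_comp, Category.assoc,
    hδ, comp_zero, sub_zero, sub_self]

end ChainMaps

section FGProper
variable {Q : Rep R G} {M : ℕ → Rep R G} {δ : ∀ i, M (i + 1) ⟶ M i}

theorem FGProjective.homFromExactAt_zero (hQ : FGProjective R G Q)
    (hδ : ∀ i, δ (i + 1) ≫ δ i = 0)
    (hlift : ∀ W, FProjective R G W → ∀ i, HomFromExactAt W M δ i)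
    (hM : ∀ i, FProjective R G (M (i + 3))) (N : ℕ) (hN : IsZero (M (N + 3))) :
    HomFromExactAt Q M δ 0 := by
  obtain ⟨T, d, π, hT, hTexact, -, hπ, hπexact, hTstrong⟩ := hQ
  intro u hu
  obtain ⟨f, hf₀, hf⟩ := exists_chainMap_lift (T := fun j : ℕ => T j) (d := fun j => d j)
    (fun j => comp_eq_zero_of_exact (hTexact j)) (fun j => hlift _ (hT j) j) (π ≫ u)
    (by rw [Category.assoc, hu, comp_zero])
    (by change (d 0 ≫ π) ≫ u = 0; rw [comp_eq_zero_of_exact hπexact, zero_comp])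
  obtain ⟨h, hh⟩ := exists_homotopic_cocycle_of_isZero hδ
    (fun j φ hφ => (hTstrong _ (hM j) j φ hφ).imp fun _ => Eq.symm) f hf N hN
  obtain ⟨ψ, hψ⟩ := exists_comp_eq_of_exact_of_surjective hπexact hπ _ hh
  have : Epi π := (Rep.epi_iff_surjective π).2 hπ
  refine ⟨ψ, (cancel_epi π).1 ?_⟩
  rw [← Category.assoc, hψ, Preadditive.sub_comp, Category.assoc, hδ, comp_zero, sub_zero, hf₀]

theorem FGProjective.homFromExactAt (hQ : FGProjective R G Q)
    (hδ : ∀ i, δ (i + 1) ≫ δ i = 0)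
    (hlift : ∀ W, FProjective R G W → ∀ i, HomFromExactAt W M δ i)
    (hM : ∀ i, FProjective R G (M (i + 3))) (N : ℕ) (hN : ∀ i, N < i → IsZero (M i)) (k : ℕ) :
    HomFromExactAt Q M δ k :=
  hQ.homFromExactAt_zero (M := fun i => M (k + i)) (δ := fun i => δ (k + i))
    (fun i => hδ (k + i)) (fun W hW i => hlift W hW (k + i)) (fun i => hM (k + i)) N
    (hN _ (by omega))

end FGProper

namespace Res
variable {A : Rep R G} (P : Res R G A)

open ZeroObject in
def augX : ℕ → Rep.{0} R G
  | 0 => 0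
  | 1 => A
  | j + 2 => P.P j

def augD : ∀ i, P.augX (i + 1) ⟶ P.augX i
  | 0 => 0
  | 1 => P.ε
  | j + 2 => P.d j

lemma augD_comp_augD : ∀ i, P.augD (i + 1) ≫ P.augD i = 0
  | 0 => comp_zero
  | 1 => comp_eq_zero_of_exact P.exact0
  | j + 2 => comp_eq_zero_of_exact (P.exact j)

lemma isZero_augX {n : ℕ} (hlen : P.LengthLe n) : ∀ i, n + 2 < i → IsZero (P.augX i)
  | j + 2, hj => hlen j (by omega)

variable {P}

lemma FSplit.homFromExactAt (hsplit : P.FSplit) {W : Rep R G} (hW : FProjective R G W) :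
    ∀ i, HomFromExactAt W P.augX P.augD i
  | 0, φ, _ => hW.exists_lift _ φ fun K hK =>
      let ⟨_, _, ht, _⟩ := hsplit K hK
      exists_resF_lift_of_comp_eq_id ht φ
  | 1, φ, hφ => hW.exists_lift _ φ fun K hK =>
      let ⟨_, _, _, hs₀, _⟩ := hsplit K hK
      exists_resF_lift_of_add_eq_id hs₀ hφ
  | j + 2, φ, hφ => hW.exists_lift _ φ fun K hK =>
      let ⟨_, _, _, _, hs⟩ := hsplit K hK
      exists_resF_lift_of_add_eq_id (hs j) hφ

end Res

/-- If `P_* → A` is an `𝔉`-split resolution of finite length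
`n` with `P_i` `𝔉`-projective for all `i ≥ 1`, then the augmented complex is
`𝔉_G`-proper: `Hom_{RG}(Q, -)` keeps it exact for every `𝔉_G`-projective `Q`. -/
theorem finite_length_resolution_FGProper (R : Type) [CommRing R] (G : Type) [Group G]
    (A : Rep R G) (P : Res R G A) (n : ℕ) (hlen : P.LengthLe n)
    (hsplit : P.FSplit) (hproj : ∀ i, 1 ≤ i → FProjective R G (P.P i)) :
    ∀ Q : Rep R G, FGProjective R G Q →
      (∀ φ : Q ⟶ A, ∃ ψ : Q ⟶ P.P 0, ψ ≫ P.ε = φ) ∧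
      (∀ φ : Q ⟶ P.P 0, φ ≫ P.ε = 0 → ∃ ψ : Q ⟶ P.P 1, ψ ≫ P.d 0 = φ) ∧
      (∀ (i : ℕ) (φ : Q ⟶ P.P (i+1)), φ ≫ P.d i = 0 →
        ∃ ψ : Q ⟶ P.P (i+2), ψ ≫ P.d (i+1) = φ) := by
  intro Q hQ
  have hexact (k : ℕ) : HomFromExactAt Q P.augX P.augD k :=
    hQ.homFromExactAt P.augD_comp_augD (fun _ => hsplit.homFromExactAt)
      (fun i => hproj (i + 1) (by omega)) (n + 2) (P.isZero_augX hlen) k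
  exact ⟨fun φ => hexact 0 φ comp_zero, hexact 1, fun i => hexact (i + 2)⟩

end FPaper
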